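/- arXiv:math-ph/0503007 — 2 statements merged into one kernel-verified Lean document; each statement's English description precedes it below -/
import Mathlib

section
/- Let A be a G-graded ρ-algebra and Ω*(A) its ℤ×G-graded algebra of universal differential forms with extension cocycle ρ̄ on Ḡ = ℤ × G satisfying ρ̄|_{G×G} = ρ and ρ̄((1,0),(n+1,α)) + ρ̄((1,0),(n,α)) = 0. Then every such cocycle ρ̄ is of the form ρ̄((n,α),(m,β)) = (−1)^{nm} φ^{−m}(α) φ^{n}(β) ρ(α,β) for a unique group homomorphism φ : G → U(k), where φ(α) = ρ̄((1,0),(0,α)). -/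
/-!
A cocycle `ε` on `ℤ × G` is bimultiplicative and skew (`ε y x = (ε x y)⁻¹`), so writing
`(n, α) = n • e + (0, α)` with `e = (1, 0)` expands `ε ((n, α), (m, β))` into
`ε(e, e)^{nm} ε(e, (0, α))^{-m} ε(e, (0, β))^n ε((0, α), (0, β))`.
The last factor is `ρ(α, β)`, `φ(α) := ε(e, (0, α))` is a homomorphism by multiplicativity in
the second variable, and the sign condition at `n = 0` gives `ε(e, e) = -ε(e, 0) = -1`.
-/

structure IsCocycle {M k : Type*} [AddCommGroup M] [CommGroupWithZero k] (ε : M → M → k) :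
    Prop where
  mul_swap : ∀ x y, ε x y * ε y x = 1
  map_add_left : ∀ x y z, ε (x + y) z = ε x z * ε y z

namespace IsCocycle

variable {M k : Type*} [AddCommGroup M] [CommGroupWithZero k] {ε : M → M → k}

theorem ne_zero (hε : IsCocycle ε) (x y : M) : ε x y ≠ 0 :=
  left_ne_zero_of_mul_eq_one (hε.mul_swap x y)

theorem apply_swap (hε : IsCocycle ε) (x y : M) : ε y x = (ε x y)⁻¹ :=
  eq_inv_of_mul_eq_one_left (hε.mul_swap y x)

theorem map_add_right (hε : IsCocycle ε) (x y z : M) : ε x (y + z) = ε x y * ε x z := by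
  rw [hε.apply_swap, hε.map_add_left, mul_inv, ← hε.apply_swap, ← hε.apply_swap]

theorem map_zero_left (hε : IsCocycle ε) (z : M) : ε 0 z = 1 := by
  have h := hε.map_add_left 0 0 z
  rw [add_zero] at h
  exact right_eq_mul₀ (hε.ne_zero 0 z) |>.mp h

theorem map_zero_right (hε : IsCocycle ε) (x : M) : ε x 0 = 1 := by
  rw [hε.apply_swap, hε.map_zero_left, inv_one]

theorem map_neg_left (hε : IsCocycle ε) (x z : M) : ε (-x) z = (ε x z)⁻¹ := by
  refine eq_inv_of_mul_eq_one_left ?_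
  rw [← hε.map_add_left, neg_add_cancel, hε.map_zero_left]

theorem map_zsmul_left (hε : IsCocycle ε) (n : ℤ) (x z : M) : ε (n • x) z = ε x z ^ n := by
  induction n using Int.induction_on with
  | zero => rw [zero_smul, zpow_zero, hε.map_zero_left]
  | succ n ih =>
    rw [add_smul, one_smul, hε.map_add_left, ih, zpow_add_one₀ (hε.ne_zero x z)]
  | pred n ih =>
    rw [sub_smul, one_smul, sub_eq_add_neg, hε.map_add_left, ih, hε.map_neg_left,
      zpow_sub_one₀ (hε.ne_zero x z)]

theorem map_zsmul_right (hε : IsCocycle ε) (n : ℤ) (x z : M) : ε x (n • z) = ε x z ^ n := by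
  rw [hε.apply_swap, hε.map_zsmul_left, ← inv_zpow, ← hε.apply_swap]

theorem apply_zsmul_add_zsmul_add (hε : IsCocycle ε) (n m : ℤ) (e a b : M) :
    ε (n • e + a) (m • e + b) = ε e e ^ (n * m) * ε e a ^ (-m) * ε e b ^ n * ε a b := by
  rw [mul_comm n m, zpow_mul, zpow_neg, ← inv_zpow, ← hε.apply_swap]
  simp only [hε.map_add_left, hε.map_add_right, hε.map_zsmul_left, hε.map_zsmul_right]
  rw [← mul_assoc, mul_right_comm _ (ε e b ^ n)]

end IsCocycle

theorem Prod.int_mk_eq_zsmul_add {G : Type*} [AddCommGroup G] (n : ℤ) (α : G) :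
    ((n, α) : ℤ × G) = n • ((1 : ℤ), (0 : G)) + (0, α) := by
  simp

theorem extended_cocycle_classification_general
    {k : Type*} [Field k] {G : Type*} [AddCommGroup G]
    (ρ : G → G → k)
    (ρb : ℤ × G → ℤ × G → k)
    (hρb1 : ∀ x y : ℤ × G, ρb x y * ρb y x = 1)
    (hρb2 : ∀ x y z : ℤ × G, ρb (x + y) z = ρb x z * ρb y z)
    (hrestrict : ∀ α β : G, ρb (0, α) (0, β) = ρ α β)
    (hsign : ∀ (n : ℤ) (α : G), ρb (1, 0) (n + 1, α) + ρb (1, 0) (n, α) = 0) :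
    ∃! φ : G → kˣ,
      (∀ α β : G, φ (α + β) = φ α * φ β) ∧
      (∀ α : G, (φ α : k) = ρb (1, 0) (0, α)) ∧
      (∀ (n m : ℤ) (α β : G),
        ρb (n, α) (m, β) =
          (-1 : k) ^ (n * m) * ((φ α ^ (-m) : kˣ) : k) * ((φ β ^ n : kˣ) : k) * ρ α β) := by
  have hε : IsCocycle ρb := ⟨hρb1, hρb2⟩
  have hee : ρb (1, 0) (1, 0) = -1 := by
    have h := hsign 0 0
    rwa [zero_add, Prod.mk_zero_zero, hε.map_zero_right, add_eq_zero_iff_eq_neg] at h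
  refine ⟨fun α => Units.mk0 _ (hε.ne_zero (1, 0) (0, α)), ⟨fun α β => ?_, fun α => rfl, ?_⟩,
    fun ψ ⟨_, hψ, _⟩ => funext fun α => Units.ext (hψ α)⟩
  · ext
    simp only [Units.val_mul, Units.val_mk0, ← hε.map_add_right, Prod.mk_add_mk, add_zero]
  · intro n m α β
    rw [Prod.int_mk_eq_zsmul_add n, Prod.int_mk_eq_zsmul_add m, hε.apply_zsmul_add_zsmul_add,
      hee, hrestrict, Units.val_zpow_eq_zpow_val, Units.val_zpow_eq_zpow_val, Units.val_mk0,
      Units.val_mk0]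

/-- Every cocycle `ρ̄` on `Ḡ = ℤ × G` restricting to `ρ` on `G` and
satisfying `ρ̄((1,0),(n+1,α)) + ρ̄((1,0),(n,α)) = 0` is of the form
`ρ̄((n,α),(m,β)) = (−1)^{nm} φ(α)^{−m} φ(β)^{n} ρ(α,β)` for a unique group homomorphism
`φ : G → U(k)`, with `φ(α) = ρ̄((1,0),(0,α))`. -/
theorem extended_cocycle_classification
    {k : Type*} [Field k] {G : Type*} [AddCommGroup G]
    (ρ : G → G → k)
    (hρ1 : ∀ a b : G, ρ a b * ρ b a = 1)
    (hρ2 : ∀ a b c : G, ρ (a + b) c = ρ a c * ρ b c)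
    (ρb : ℤ × G → ℤ × G → k)
    (hρb1 : ∀ x y : ℤ × G, ρb x y * ρb y x = 1)
    (hρb2 : ∀ x y z : ℤ × G, ρb (x + y) z = ρb x z * ρb y z)
    (hrestrict : ∀ α β : G, ρb (0, α) (0, β) = ρ α β)
    (hsign : ∀ (n : ℤ) (α : G), ρb (1, 0) (n + 1, α) + ρb (1, 0) (n, α) = 0) :
    ∃! φ : G → kˣ,
      (∀ α β : G, φ (α + β) = φ α * φ β) ∧
      (∀ α : G, (φ α : k) = ρb (1, 0) (0, α)) ∧
      (∀ (n m : ℤ) (α β : G),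
        ρb (n, α) (m, β) =
          (-1 : k) ^ (n * m) * ((φ α ^ (-m) : kˣ) : k) * ((φ β ^ n : kˣ) : k) * ρ α β) :=
  extended_cocycle_classification_general ρ ρb hρb1 hρb2 hrestrict hsign
end

section
/- Given a twisted cocycle ρ on an abelian group G and a group homomorphism φ : G → U(k), the map ρ̄ : (ℤ×G) × (ℤ×G) → k defined by ρ̄((n,α),(m,β)) = (−1)^{nm} φ(α)^{−m} φ(β)^{n} ρ(α,β) is a twisted cocycle on ℤ × G: ρ̄(x,y)ρ̄(y,x) = 1 and ρ̄(x+y,z) = ρ̄(x,z)ρ̄(y,z) for all x, y, z ∈ ℤ × G, and it satisfies ρ̄((1,0),(n,α)) = (−1)^n φ(α). -/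
/-- The extension of a cocycle `ρ` on `G` to `ℤ × G` associated with a homomorphism
`φ : G → U(k)`: `ρ̄((n,α),(m,β)) = (−1)^{nm} φ(α)^{−m} φ(β)^{n} ρ(α,β)`. -/
noncomputable def extCocycle {k : Type*} [Field k] {G : Type*} [AddCommGroup G]
    (ρ : G → G → k) (φ : G → kˣ) (x y : ℤ × G) : k :=
  (-1 : k) ^ (x.1 * y.1) * ((φ x.2 ^ (-y.1) : kˣ) : k) * ((φ y.2 ^ x.1 : kˣ) : k) *
    ρ x.2 y.2

/-! Each factor of `ρ̄(x,y) ρ̄(y,x)` cancels against its partner: the signs because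
`(-1)^{2nm} = 1`, the `φ`-powers because they come with opposite exponents, and `ρ` by
skew-symmetry. Additivity in the first variable is checked factor by factor, and
`ρ̄((1,0),(n,α)) = (-1)^n φ(α)` because `φ(0) = 1` and `ρ(0,α) = 1`. -/

theorem apply_zero_left_eq_one {M G : Type*} [CommMonoid M] [AddCommGroup G] (ρ : G → G → M)
    (hρ1 : ∀ a b : G, ρ a b * ρ b a = 1)
    (hρ2 : ∀ a b c : G, ρ (a + b) c = ρ a c * ρ b c) (c : G) : ρ 0 c = 1 :=
  calc ρ 0 c = ρ 0 c * (ρ 0 c * ρ c 0) := by rw [hρ1, mul_one]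
    _ = ρ (0 + 0) c * ρ c 0 := by rw [hρ2, mul_assoc]
    _ = 1 := by rw [add_zero, hρ1]

theorem neg_one_zpow_mul_mul_neg_one_zpow_mul {k : Type*} [DivisionRing k] (n m : ℤ) :
    (-1 : k) ^ (n * m) * (-1 : k) ^ (m * n) = 1 := by
  rw [mul_comm m n, ← zpow_add₀ (neg_ne_zero.mpr one_ne_zero), ← two_mul, zpow_mul]
  norm_num

theorem Units.val_zpow_neg_mul_val_zpow {M : Type*} [Monoid M] (u : Mˣ) (n : ℤ) :
    ((u ^ (-n) : Mˣ) : M) * ((u ^ n : Mˣ) : M) = 1 := by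
  simp

section

variable {k : Type*} [Field k] {G : Type*} [AddCommGroup G] (ρ : G → G → k) (φ : G → kˣ)

theorem extCocycle_mul_swap (hρ1 : ∀ a b : G, ρ a b * ρ b a = 1) (x y : ℤ × G) :
    extCocycle ρ φ x y * extCocycle ρ φ y x = 1 := by
  obtain ⟨n, a⟩ := x
  obtain ⟨m, b⟩ := y
  calc extCocycle ρ φ (n, a) (m, b) * extCocycle ρ φ (m, b) (n, a)
      = ((-1 : k) ^ (n * m) * (-1 : k) ^ (m * n)) *
          (((φ a ^ (-m) : kˣ) : k) * ((φ a ^ m : kˣ) : k)) *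
          (((φ b ^ (-n) : kˣ) : k) * ((φ b ^ n : kˣ) : k)) * (ρ a b * ρ b a) := by
        simp only [extCocycle]; ring
    _ = 1 := by
        rw [neg_one_zpow_mul_mul_neg_one_zpow_mul, Units.val_zpow_neg_mul_val_zpow,
          Units.val_zpow_neg_mul_val_zpow, hρ1, one_mul, one_mul, one_mul]

theorem extCocycle_add_left (hρ2 : ∀ a b c : G, ρ (a + b) c = ρ a c * ρ b c)
    (hφ : ∀ α β : G, φ (α + β) = φ α * φ β) (x y z : ℤ × G) :
    extCocycle ρ φ (x + y) z = extCocycle ρ φ x z * extCocycle ρ φ y z := by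
  simp only [extCocycle, Prod.fst_add, Prod.snd_add, add_mul,
    zpow_add₀ (by norm_num : (-1 : k) ≠ 0), hφ, mul_zpow, zpow_add, hρ2, Units.val_mul]
  ring

theorem extCocycle_one_zero_left (hρ1 : ∀ a b : G, ρ a b * ρ b a = 1)
    (hρ2 : ∀ a b c : G, ρ (a + b) c = ρ a c * ρ b c)
    (hφ : ∀ α β : G, φ (α + β) = φ α * φ β) (n : ℤ) (α : G) :
    extCocycle ρ φ (1, 0) (n, α) = (-1 : k) ^ n * (φ α : k) := by
  have hφ0 : φ 0 = 1 := by simpa using hφ 0 0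
  simp [extCocycle, hφ0, apply_zero_left_eq_one ρ hρ1 hρ2]

end

/-- Given a twisted cocycle `ρ` on `G` and a homomorphism `φ : G → U(k)`,
the map `ρ̄((n,α),(m,β)) = (−1)^{nm} φ(α)^{−m} φ(β)^{n} ρ(α,β)` is a twisted cocycle on
`ℤ × G`, and `ρ̄((1,0),(n,α)) = (−1)^n φ(α)`. -/
theorem extCocycle_is_cocycle {k : Type*} [Field k] {G : Type*} [AddCommGroup G]
    (ρ : G → G → k)
    (hρ1 : ∀ a b : G, ρ a b * ρ b a = 1)
    (hρ2 : ∀ a b c : G, ρ (a + b) c = ρ a c * ρ b c)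
    (φ : G → kˣ) (hφ : ∀ α β : G, φ (α + β) = φ α * φ β) :
    (∀ x y : ℤ × G, extCocycle ρ φ x y * extCocycle ρ φ y x = 1) ∧
    (∀ x y z : ℤ × G, extCocycle ρ φ (x + y) z = extCocycle ρ φ x z * extCocycle ρ φ y z) ∧
    (∀ (n : ℤ) (α : G), extCocycle ρ φ (1, 0) (n, α) = (-1 : k) ^ n * (φ α : k)) :=
  ⟨extCocycle_mul_swap ρ φ hρ1, extCocycle_add_left ρ φ hρ2 hφ,
    extCocycle_one_zero_left ρ φ hρ1 hρ2 hφ⟩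
end
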